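/- If w is a bounded smooth Gaussian-integrable solution of the self-similar equation on ℝ^n satisfying the orthogonality relation ∫(Λ(w))(∇w·y₀) ρ dy = 0 for all y₀, then ∫(∇w·y)(∇w·y₀)ρ dy = -(1/(2(p-1))) ∫ w² (y·y₀) ρ dy for every y₀ ∈ ℝ^n. -/

import Mathlib

open MeasureTheory Real

noncomputable def lap {n : ℕ} (w : EuclideanSpace ℝ (Fin n) → ℝ)
    (y : EuclideanSpace ℝ (Fin n)) : ℝ :=
  ∑ i, fderiv ℝ (fun z => fderiv ℝ w z (EuclideanSpace.single i 1)) y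
      (EuclideanSpace.single i 1)

noncomputable def rho (n : ℕ) (y : EuclideanSpace ℝ (Fin n)) : ℝ :=
  (4 * Real.pi) ^ (-(n : ℝ) / 2) * Real.exp (-‖y‖ ^ 2 / 4)

lemma int_gauss (n : ℕ) {a : ℝ} (ha : 0 < a) :
    Integrable (fun y : EuclideanSpace ℝ (Fin n) => Real.exp (-(a * ‖y‖^2))) := by
  have h := (GaussianFourier.integrable_cexp_neg_mul_sq_norm_add
    (V := EuclideanSpace ℝ (Fin n)) (b := (a:ℂ)) (by simpa using ha) 0 0).norm
  simp only [Complex.norm_exp] at h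
  convert h using 2 with y
  have : ((‖y‖:ℂ) ^ 2).re = ‖y‖^2 := by norm_cast
  simp [Complex.add_re, Complex.mul_re, this]

lemma int_gauss8 (n : ℕ) :
    Integrable (fun y : EuclideanSpace ℝ (Fin n) => Real.exp (-(‖y‖^2/8))) := by
  have h := int_gauss n (a := 1/8) (by norm_num)
  convert h using 3 with y
  ring

lemma integrable_of_le_gauss {n : ℕ} {f : EuclideanSpace ℝ (Fin n) → ℝ}
    (hf : Continuous f) {C : ℝ}
    (h : ∀ y, |f y| ≤ C * Real.exp (-(‖y‖^2/8))) : Integrable f := by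
  exact ((int_gauss8 n).const_mul C).mono' hf.aestronglyMeasurable
    (Filter.Eventually.of_forall (fun y => by simpa [Real.norm_eq_abs] using h y))

lemma gauss_bd {t : ℝ} (ht : 0 ≤ t) :
    t * Real.exp (-(t^2/4)) ≤ 4 * Real.exp (-(t^2/8)) := by
  have h : t * Real.exp (-(t^2/8)) ≤ 4 := by
    rcases le_total t 4 with h4 | h4
    · calc t * Real.exp (-(t^2/8)) ≤ t * 1 := by
            apply mul_le_mul_of_nonneg_left _ ht
            exact Real.exp_le_one_iff.2 (neg_nonpos.2 (by positivity))
        _ ≤ 4 := by linarith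
    · have he : t^2/8 ≤ Real.exp (t^2/8) :=
        (Real.add_one_le_exp _).trans' (by linarith [sq_nonneg t])
      have hpos : (0:ℝ) < t^2/8 := by positivity
      have heq : t * Real.exp (-(t^2/8)) = t / Real.exp (t^2/8) := by
        rw [Real.exp_neg]; ring
      rw [heq]
      calc t / Real.exp (t^2/8) ≤ t / (t^2/8) :=
            div_le_div_of_nonneg_left ht hpos he
        _ = 8 / t := by field_simp
        _ ≤ 4 := by rw [div_le_iff₀ (by linarith)]; nlinarith
  calc t * Real.exp (-(t^2/4)) = (t * Real.exp (-(t^2/8))) * Real.exp (-(t^2/8)) := by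
        rw [mul_assoc, ← Real.exp_add]; ring_nf
    _ ≤ 4 * Real.exp (-(t^2/8)) :=
        mul_le_mul_of_nonneg_right h (Real.exp_nonneg _)

lemma rho_hasFDerivAt (n : ℕ) (y : EuclideanSpace ℝ (Fin n)) :
    HasFDerivAt (rho n) ((-(1/2) * rho n y) • (innerSL ℝ y)) y := by
  have h1 : HasFDerivAt (fun z : EuclideanSpace ℝ (Fin n) => ‖z‖ ^ 2)
      (2 • (innerSL ℝ y)) y := by
    simpa using (hasFDerivAt_id y).norm_sq
  have h2 : HasFDerivAt (fun z : EuclideanSpace ℝ (Fin n) => -‖z‖ ^ 2 / 4)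
      ((-(1/4) : ℝ) • ((2:ℕ) • (innerSL ℝ y))) y := by
    have := h1.const_smul (-(1/4) : ℝ)
    convert this using 1
    · rfl
    · rfl
    · rfl
    ext z
    simp; ring
  have h4 := h2.exp.const_mul ((4 * Real.pi) ^ (-(n : ℝ) / 2))
  convert h4 using 1
  · rfl
  · rfl
  · rfl
  · rfl
  ext z
  simp [rho]
  ring

lemma rho_pos (n : ℕ) (y : EuclideanSpace ℝ (Fin n)) : 0 < rho n y := by
  unfold rho
  positivity

lemma rho_eq (n : ℕ) (y : EuclideanSpace ℝ (Fin n)) :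
    rho n y = (4 * Real.pi) ^ (-(n : ℝ) / 2) * Real.exp (-(‖y‖ ^ 2 / 4)) := by
  rw [rho]; norm_num [neg_div]

/-- If `Λ(w) = (2/(p-1))w + y·∇w` is orthogonal to all `∇w·y₀`, then
`∫(∇w·y)(∇w·y₀)ρ = -(1/(2(p-1))) ∫ w² ⟨y,y₀⟩ ρ`. -/
theorem radial_directional_identity
    (n : ℕ) (p : ℝ) (hp : 1 < p) (w : EuclideanSpace ℝ (Fin n) → ℝ)
    (hsmooth : ContDiff ℝ (⊤ : ℕ∞) w)
    (hbd : ∃ M : ℝ, ∀ y, |w y| ≤ M ∧ ‖fderiv ℝ w y‖ ≤ M)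
    (heq : ∀ y, lap w y - (1 / 2) * fderiv ℝ w y y - w y / (p - 1)
        + |w y| ^ (p - 1) * w y = 0)
    (horth : ∀ y₀ : EuclideanSpace ℝ (Fin n),
        ∫ y, ((2 / (p - 1)) * w y + fderiv ℝ w y y) * fderiv ℝ w y y₀ * rho n y = 0) :
    ∀ y₀ : EuclideanSpace ℝ (Fin n),
      ∫ y, (fderiv ℝ w y y) * (fderiv ℝ w y y₀) * rho n y
        = -(1 / (2 * (p - 1))) * ∫ y, (w y) ^ 2 * (inner ℝ y y₀ : ℝ) * rho n y := by
  intro y₀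
  obtain ⟨M, hM⟩ := hbd
  have hp1 : (0:ℝ) < p - 1 := by linarith
  have hM0 : 0 ≤ M := le_trans (abs_nonneg _) (hM 0).1
  set C₀ : ℝ := (4 * Real.pi) ^ (-(n : ℝ) / 2) with hC₀
  have hC₀pos : 0 < C₀ := by
    rw [hC₀]; positivity
  -- continuity facts
  have hwc : Continuous w := hsmooth.continuous
  have hdwc : Continuous (fderiv ℝ w) := (hsmooth.fderiv_right (m := (⊤ : ℕ∞)) (by simp)).continuous
  have hc0 : Continuous fun y => fderiv ℝ w y y₀ := hdwc.clm_apply continuous_const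
  have hcy : Continuous fun y : EuclideanSpace ℝ (Fin n) => fderiv ℝ w y y :=
    hdwc.clm_apply continuous_id
  have hρc : Continuous (rho n) := by
    unfold rho; continuity
  have hic : Continuous fun y : EuclideanSpace ℝ (Fin n) => (inner ℝ y y₀ : ℝ) :=
    continuous_id.inner continuous_const
  -- pointwise bounds
  have hbE : ∀ y : EuclideanSpace ℝ (Fin n), (0:ℝ) ≤ Real.exp (-(‖y‖^2/8)) :=
    fun y => Real.exp_nonneg _
  have hb0 : ∀ y : EuclideanSpace ℝ (Fin n),
      rho n y ≤ C₀ * Real.exp (-(‖y‖^2/8)) := by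
    intro y
    rw [rho_eq]
    apply mul_le_mul_of_nonneg_left _ hC₀pos.le
    apply Real.exp_le_exp.2
    nlinarith [sq_nonneg ‖y‖]
  have hb1 : ∀ y : EuclideanSpace ℝ (Fin n),
      ‖y‖ * rho n y ≤ 4 * C₀ * Real.exp (-(‖y‖^2/8)) := by
    intro y
    rw [rho_eq]
    have := gauss_bd (norm_nonneg y)
    calc ‖y‖ * (C₀ * Real.exp (-(‖y‖ ^ 2 / 4)))
        = C₀ * (‖y‖ * Real.exp (-(‖y‖^2/4))) := by ring
      _ ≤ C₀ * (4 * Real.exp (-(‖y‖^2/8))) :=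
          mul_le_mul_of_nonneg_left this hC₀pos.le
      _ = 4 * C₀ * Real.exp (-(‖y‖^2/8)) := by ring
  have hdw0 : ∀ y, |fderiv ℝ w y y₀| ≤ M * ‖y₀‖ := by
    intro y
    calc |fderiv ℝ w y y₀| ≤ ‖fderiv ℝ w y‖ * ‖y₀‖ := (fderiv ℝ w y).le_opNorm y₀
      _ ≤ M * ‖y₀‖ := mul_le_mul_of_nonneg_right (hM y).2 (norm_nonneg _)
  have hdwy : ∀ y : EuclideanSpace ℝ (Fin n), |fderiv ℝ w y y| ≤ M * ‖y‖ := by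
    intro y
    calc |fderiv ℝ w y y| ≤ ‖fderiv ℝ w y‖ * ‖y‖ := (fderiv ℝ w y).le_opNorm y
      _ ≤ M * ‖y‖ := mul_le_mul_of_nonneg_right (hM y).2 (norm_nonneg _)
  -- the integrable functions
  have hI1 : Integrable (fun y => w y * fderiv ℝ w y y₀ * rho n y) := by
    apply integrable_of_le_gauss ((hwc.mul hc0).mul hρc) (C := M * (M * ‖y₀‖) * C₀)
    intro y
    simp only [Pi.mul_apply, Pi.pow_apply]
    rw [abs_mul, abs_mul, abs_of_pos (rho_pos n y)]
    have h1 := (hM y).1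
    have h2 := hdw0 y
    have h3 := hb0 y
    have h4 := (rho_pos n y).le
    have h5 := hbE y
    have h6 : |w y| * |fderiv ℝ w y y₀| ≤ M * (M * ‖y₀‖) := by
      apply mul_le_mul h1 h2 (abs_nonneg _) hM0
    calc |w y| * |fderiv ℝ w y y₀| * rho n y
        ≤ M * (M * ‖y₀‖) * rho n y :=
          mul_le_mul_of_nonneg_right h6 h4
      _ ≤ M * (M * ‖y₀‖) * (C₀ * Real.exp (-(‖y‖^2/8))) := by
          apply mul_le_mul_of_nonneg_left h3 (by positivity)
      _ = M * (M * ‖y₀‖) * C₀ * Real.exp (-(‖y‖^2/8)) := by ring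
  have hI2 : Integrable (fun y : EuclideanSpace ℝ (Fin n) =>
      fderiv ℝ w y y * fderiv ℝ w y y₀ * rho n y) := by
    apply integrable_of_le_gauss ((hcy.mul hc0).mul hρc)
      (C := M * (M * ‖y₀‖) * (4 * C₀))
    intro y
    simp only [Pi.mul_apply, Pi.pow_apply]
    rw [abs_mul, abs_mul, abs_of_pos (rho_pos n y)]
    have h1 := hdwy y
    have h2 := hdw0 y
    have h3 := hb1 y
    have h4 := (rho_pos n y).le
    have h6 : |fderiv ℝ w y y| * |fderiv ℝ w y y₀| ≤ (M * ‖y‖) * (M * ‖y₀‖) :=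
      mul_le_mul h1 h2 (abs_nonneg _) (by positivity)
    calc |fderiv ℝ w y y| * |fderiv ℝ w y y₀| * rho n y
        ≤ (M * ‖y‖) * (M * ‖y₀‖) * rho n y := mul_le_mul_of_nonneg_right h6 h4
      _ = (M * (M * ‖y₀‖)) * (‖y‖ * rho n y) := by ring
      _ ≤ (M * (M * ‖y₀‖)) * (4 * C₀ * Real.exp (-(‖y‖^2/8))) := by
          apply mul_le_mul_of_nonneg_left h3 (by positivity)
      _ = M * (M * ‖y₀‖) * (4 * C₀) * Real.exp (-(‖y‖^2/8)) := by ring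
  have hI3 : Integrable (fun y : EuclideanSpace ℝ (Fin n) =>
      w y ^ 2 * (inner ℝ y y₀ : ℝ) * rho n y) := by
    apply integrable_of_le_gauss (((hwc.pow 2).mul hic).mul hρc)
      (C := M * M * ‖y₀‖ * (4 * C₀))
    intro y
    simp only [Pi.mul_apply, Pi.pow_apply]
    rw [abs_mul, abs_mul, abs_of_pos (rho_pos n y)]
    have h1 := (hM y).1
    have h2 : |(inner ℝ y y₀ : ℝ)| ≤ ‖y‖ * ‖y₀‖ := abs_real_inner_le_norm y y₀
    have h3 := hb1 y
    have h4 := (rho_pos n y).le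
    have h5 : |w y ^ 2| ≤ M * M := by
      rw [abs_pow]; nlinarith [abs_nonneg (w y)]
    have h6 : |w y ^ 2| * |(inner ℝ y y₀ : ℝ)| ≤ (M * M) * (‖y‖ * ‖y₀‖) :=
      mul_le_mul h5 h2 (abs_nonneg _) (by positivity)
    calc |w y ^ 2| * |(inner ℝ y y₀ : ℝ)| * rho n y
        ≤ (M * M) * (‖y‖ * ‖y₀‖) * rho n y := mul_le_mul_of_nonneg_right h6 h4
      _ = (M * M * ‖y₀‖) * (‖y‖ * rho n y) := by ring
      _ ≤ (M * M * ‖y₀‖) * (4 * C₀ * Real.exp (-(‖y‖^2/8))) := by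
          apply mul_le_mul_of_nonneg_left h3 (by positivity)
      _ = M * M * ‖y₀‖ * (4 * C₀) * Real.exp (-(‖y‖^2/8)) := by ring
  have hI4 : Integrable (fun y : EuclideanSpace ℝ (Fin n) =>
      w y * rho n y * w y) := by
    apply integrable_of_le_gauss ((hwc.mul hρc).mul hwc) (C := M * M * C₀)
    intro y
    simp only [Pi.mul_apply, Pi.pow_apply]
    rw [abs_mul, abs_mul, abs_of_pos (rho_pos n y)]
    have h1 := (hM y).1
    have h3 := hb0 y
    have h4 := (rho_pos n y).le
    calc |w y| * rho n y * |w y| = |w y| * |w y| * rho n y := by ring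
      _ ≤ (M * M) * rho n y := by
          apply mul_le_mul_of_nonneg_right _ h4
          exact mul_le_mul h1 h1 (abs_nonneg _) hM0
      _ ≤ (M * M) * (C₀ * Real.exp (-(‖y‖^2/8))) := by
          apply mul_le_mul_of_nonneg_left h3 (by positivity)
      _ = M * M * C₀ * Real.exp (-(‖y‖^2/8)) := by ring
  -- derivative of f = w * rho
  have hwdiff : Differentiable ℝ w := hsmooth.differentiable (by simp)
  have hfD : ∀ y, HasFDerivAt (fun z => w z * rho n z)
      (w y • ((-(1/2) * rho n y) • (innerSL ℝ y)) + rho n y • fderiv ℝ w y) y :=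
    fun y => ((hwdiff y).hasFDerivAt).mul (rho_hasFDerivAt n y)
  have hder : ∀ y, fderiv ℝ (fun z => w z * rho n z) y y₀
      = w y * (-(1/2) * rho n y * (inner ℝ y y₀ : ℝ)) + rho n y * fderiv ℝ w y y₀ := by
    intro y
    rw [(hfD y).fderiv]
    simp [smul_eq_mul]
  -- integration by parts
  have hibp : ∫ y, (w y * rho n y) * fderiv ℝ w y y₀
      = -∫ y, fderiv ℝ (fun z => w z * rho n z) y y₀ * w y := by
    apply integral_mul_fderiv_eq_neg_fderiv_mul_of_integrable
    · -- Integrable (fderiv f y y₀ * w y)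
      have : (fun y => fderiv ℝ (fun z => w z * rho n z) y y₀ * w y)
          = fun y => (-(1/2)) * (w y ^ 2 * (inner ℝ y y₀ : ℝ) * rho n y)
              + w y * fderiv ℝ w y y₀ * rho n y := by
        funext y; rw [hder y]; ring
      rw [this]
      exact (hI3.const_mul _).add hI1
    · -- Integrable (f * fderiv w y y₀)
      have : (fun y => (w y * rho n y) * fderiv ℝ w y y₀)
          = fun y => w y * fderiv ℝ w y y₀ * rho n y := by
        funext y; ring
      rw [this]; exact hI1
    · exact hI4
    · exact fun y _ => (hfD y).differentiableAt
    · exact fun x _ => hwdiff x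
  -- rewrite both sides of hibp
  have hL : ∫ y, (w y * rho n y) * fderiv ℝ w y y₀
      = ∫ y, w y * fderiv ℝ w y y₀ * rho n y := by
    congr 1; funext y; ring
  have hR : ∫ y, fderiv ℝ (fun z => w z * rho n z) y y₀ * w y
      = (-(1/2)) * (∫ y, w y ^ 2 * (inner ℝ y y₀ : ℝ) * rho n y)
        + ∫ y, w y * fderiv ℝ w y y₀ * rho n y := by
    have h1 : (fun y => fderiv ℝ (fun z => w z * rho n z) y y₀ * w y)
        = fun y => (-(1/2)) * (w y ^ 2 * (inner ℝ y y₀ : ℝ) * rho n y)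
            + w y * fderiv ℝ w y y₀ * rho n y := by
      funext y; rw [hder y]; ring
    rw [h1, integral_add (hI3.const_mul _) hI1, integral_const_mul]
  set A := ∫ y, w y * fderiv ℝ w y y₀ * rho n y with hA
  set B := ∫ y, w y ^ 2 * (inner ℝ y y₀ : ℝ) * rho n y with hB
  have e1 : A = (1/4) * B := by
    rw [hL, hR] at hibp
    linarith
  -- use orthogonality
  have horth' := horth y₀
  have hsplit : (fun y => ((2 / (p - 1)) * w y + fderiv ℝ w y y) * fderiv ℝ w y y₀ * rho n y)
      = fun y => (2/(p-1)) * (w y * fderiv ℝ w y y₀ * rho n y)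
          + fderiv ℝ w y y * fderiv ℝ w y y₀ * rho n y := by
    funext y; ring
  rw [hsplit, integral_add (hI1.const_mul _) hI2, integral_const_mul] at horth'
  have e2 : (2/(p-1)) * A + ∫ y, fderiv ℝ w y y * fderiv ℝ w y y₀ * rho n y = 0 := horth'
  have hpne : p - 1 ≠ 0 := ne_of_gt hp1
  have : (∫ y, fderiv ℝ w y y * fderiv ℝ w y y₀ * rho n y) = -((2/(p-1)) * ((1/4) * B)) := by
    rw [← e1]; linarith
  rw [this]
  field_simp
  ring
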